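/- arXiv:1303.6806 — 2 statements merged into one kernel-verified Lean document; each statement's English description precedes it below -/
import Mathlib

section
/- Let A = (ℤ/2ℤ)^k × (ℤ/2ℤ)^l with k ≥ 1, acting on a k-dimensional complex vector space V_Z by the representation refl_k ⊠ triv_l, where refl_k = ⊕_{i=1}^k sgn^{(i)} (the i-th factor of (ℤ/2ℤ)^k acts by -1 on the i-th coordinate and trivially elsewhere, and (ℤ/2ℤ)^l acts trivially). Then for every one-dimensional character φ of A, the (-1)-elliptic self-pairing ⟨φ,φ⟩^{-1}_A := ⟨φ ⊗ ∧V_Z, φ⟩_A equals 1, and if φ₁ ⊗ φ₂ is nontrivial on the (ℤ/2ℤ)^l factor then ⟨φ₁,φ₂⟩^{-1}_A = 0. -/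
noncomputable section

/-- The group `A = (ℤ/2ℤ)^k × (ℤ/2ℤ)^l` (written multiplicatively). -/
abbrev A4 (k l : ℕ) :=
  Multiplicative (Fin k → ZMod 2) × Multiplicative (Fin l → ZMod 2)

/-- The matrix by which `a ∈ A` acts on the `k`-dimensional space `V_Z` for the
representation `refl_k ⊠ triv_l` (the `i`-th factor of `(ℤ/2ℤ)^k` acts by `-1` on the
`i`-th coordinate, and `(ℤ/2ℤ)^l` acts trivially). -/
def M4 {k l : ℕ} (a : A4 k l) : Matrix (Fin k) (Fin k) ℂ :=
  Matrix.diagonal fun i => (-1 : ℂ) ^ ((Multiplicative.toAdd a.1) i).val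

/-- The `(-1)`-elliptic pairing `⟨φ, φ'⟩^{-1}_A = (1/|A|) ∑_a φ(a) φ'(a) det_{V_Z}(1+a)`. -/
def pair4 (k l : ℕ) (φ φ' : A4 k l →* ℂ) : ℂ :=
  (1 / (Fintype.card (A4 k l) : ℂ)) *
    ∑ a : A4 k l, φ a * φ' a * Matrix.det ((1 : Matrix (Fin k) (Fin k) ℂ) + M4 a)

/-! `det(1 + a)` on `V_Z` vanishes unless `a` acts trivially, i.e. unless `a` lies in the
`(ℤ/2ℤ)^l` factor, where it equals `2^k`. Hence the pairing is the average of the character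
`φ₁ φ₂` over `(ℤ/2ℤ)^l`: this is `1` when `φ₁ = φ₂`, since `(ℤ/2ℤ)^l` has exponent `2`,
and `0` when the character is nontrivial, by orthogonality. -/

open Finset

lemma ZMod.one_add_neg_one_pow_val (x : ZMod 2) :
    1 + (-1 : ℂ) ^ x.val = if x = 0 then 2 else 0 := by
  obtain rfl | rfl : x = 0 ∨ x = 1 := by decide +revert
  · norm_num
  · norm_num [ZMod.val_one]

lemma det_one_add_M4 {k l : ℕ} (a : A4 k l) :
    (1 + M4 a).det = if a.1 = 1 then (2 : ℂ) ^ k else 0 := by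
  rw [M4, ← Matrix.diagonal_one, Matrix.diagonal_add, Matrix.det_diagonal]
  simp_rw [ZMod.one_add_neg_one_pow_val, Fintype.prod_ite_zero, prod_const, card_univ,
    Fintype.card_fin]
  congr 1
  exact propext ⟨fun h => Multiplicative.toAdd.injective (funext h), fun h i => by simp [h]⟩

lemma mul_self_eq_one_of_pi_zmod_two {ι : Type*} (y : Multiplicative (ι → ZMod 2)) :
    y * y = 1 :=
  Multiplicative.toAdd.injective <| funext fun _ => CharTwo.add_self_eq_zero _

lemma pair4_eq_average {k l : ℕ} (φ₁ φ₂ : A4 k l →* ℂ) :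
    pair4 k l φ₁ φ₂ = (2 ^ l)⁻¹ * ∑ y, (φ₁ * φ₂).comp (MonoidHom.inr _ _) y := by
  have hcard : (Fintype.card (A4 k l) : ℂ) = 2 ^ k * 2 ^ l := by
    simp [Fintype.card_prod]
  simp_rw [pair4, hcard, det_one_add_M4, mul_ite, mul_zero, Fintype.sum_prod_type]
  rw [Fintype.sum_eq_single 1 fun x hx => by simp [hx]]
  simp only [if_true, ← sum_mul, MonoidHom.comp_apply, MonoidHom.mul_apply, MonoidHom.inr_apply]
  field_simp

theorem stmt_4_general (k l : ℕ) :
    (∀ φ : A4 k l →* ℂ, pair4 k l φ φ = 1) ∧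
    (∀ φ₁ φ₂ : A4 k l →* ℂ,
      (∃ y : Multiplicative (Fin l → ZMod 2), φ₁ (1, y) * φ₂ (1, y) ≠ 1) →
        pair4 k l φ₁ φ₂ = 0) := by
  refine ⟨fun φ => ?_, fun φ₁ φ₂ ⟨y, hy⟩ => ?_⟩
  · have hsq : ∀ y, (φ * φ).comp (MonoidHom.inr _ _) y = 1 := fun y => by
      rw [MonoidHom.comp_apply, MonoidHom.mul_apply, ← map_mul, MonoidHom.inr_apply,
        Prod.mk_mul_mk, one_mul, mul_self_eq_one_of_pi_zmod_two, Prod.mk_one_one, map_one]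
    simp [pair4_eq_average, hsq]
  · have hne : (φ₁ * φ₂).comp (MonoidHom.inr _ _) ≠ 1 := fun h => hy (DFunLike.congr_fun h y)
    rw [pair4_eq_average, sum_hom_units_eq_zero _ hne, mul_zero]

/-- For `A = (ℤ/2ℤ)^k × (ℤ/2ℤ)^l`, `k ≥ 1`, acting on `V_Z = ℂ^k`
by `refl_k ⊠ triv_l`:  every one-dimensional character `φ` of `A` satisfies
`⟨φ,φ⟩^{-1}_A = 1`, and if `φ₁ ⊗ φ₂` is nontrivial on the `(ℤ/2ℤ)^l` factor then
`⟨φ₁,φ₂⟩^{-1}_A = 0`. -/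
theorem stmt_4 (k l : ℕ) (hk : 0 < k) :
    (∀ φ : A4 k l →* ℂ, pair4 k l φ φ = 1) ∧
    (∀ φ₁ φ₂ : A4 k l →* ℂ,
      (∃ y : Multiplicative (Fin l → ZMod 2), φ₁ (1, y) * φ₂ (1, y) ≠ 1) →
        pair4 k l φ₁ φ₂ = 0) :=
  stmt_4_general k l
end
end

section
/- Let W be a finite group acting on a finite-dimensional complex vector space V, and let 𝒮 be a (virtual) representation of a double cover W̃ of W whose character squared satisfies |tr_𝒮(w̃)|² = a_V·det_V(1+w). Then the linear map ι: R(W) → R(W̃), ι(σ) = σ ⊗ 𝒮, satisfies ⟨ι(σ), ι(σ')⟩_{W̃} = a_V·⟨σ, σ'⟩^{-1}_W for all virtual characters σ, σ', where ⟨σ,σ'⟩^{-1}_W = (1/|W|)∑_w σ(w)σ'(w)det_V(1+w). In particular ι kills exactly the radical of ⟨,⟩^{-1}_W and induces an injection on R(W)/rad⟨,⟩^{-1}_W. -/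
/-!
Every fibre of the surjection `W̃ → W` has `|ker|` elements, so averaging a function
pulled back from `W` over `W̃` is the same as averaging it over `W`. Since
`|𝒮|² = a_V · det_V(1 + w)`, the summand of `⟨σ ⊗ 𝒮, σ' ⊗ 𝒮⟩_{W̃}` is pulled back from
`a_V · σ σ'* det_V(1 + w)`, which gives the identity. The same hypothesis shows that the
weight `det_V(1 + w)` is real and nonnegative, so `⟨,⟩^{-1}_W` is a positive semidefinite
weighted form: its radical consists of the `σ` vanishing wherever the weight does not,
i.e. of those `σ` with `σ ⊗ 𝒮 = 0`.
-/

open Finset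
open scoped ComplexOrder

namespace MonoidHom

variable {G H : Type*} [Group G] [Fintype G] [Group H] [Fintype H]

theorem sum_comp_of_surjective [DecidableEq H] {M : Type*} [AddCommMonoid M] (p : G →* H)
    (hp : Function.Surjective p) (F : H → M) :
    ∑ g, F (p g) = #{g | p g = 1} • ∑ h, F h := by
  rw [sum_comp, image_univ_of_surjective hp, smul_sum]
  refine sum_congr rfl fun h _ => ?_
  rw [card_fiber_eq_of_mem_range p (hp h) (hp 1)]

theorem card_eq_card_fiber_one_mul_card [DecidableEq H] (p : G →* H)
    (hp : Function.Surjective p) :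
    Fintype.card G = #{g | p g = 1} * Fintype.card H := by
  simpa using p.sum_comp_of_surjective hp (fun _ => (1 : ℕ))

theorem average_comp_of_surjective {K : Type*} [DivisionRing K] [CharZero K] (p : G →* H)
    (hp : Function.Surjective p) (F : H → K) :
    (Fintype.card G : K)⁻¹ * ∑ g, F (p g) = (Fintype.card H : K)⁻¹ * ∑ h, F h := by
  classical
  have hfiber : (#{g | p g = 1} : K) ≠ 0 :=
    Nat.cast_ne_zero.2 (card_ne_zero.2 ⟨1, by simp⟩)
  rw [p.sum_comp_of_surjective hp, p.card_eq_card_fiber_one_mul_card hp, nsmul_eq_mul,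
    Nat.cast_mul, mul_inv_rev, mul_assoc, inv_mul_cancel_left₀ hfiber]

end MonoidHom

theorem Complex.forall_sum_mul_star_mul_eq_zero_iff {X : Type*} [Fintype X] {D : X → ℂ}
    (hD : ∀ x, 0 ≤ D x) (χ : X → ℂ) :
    (∀ χ' : X → ℂ, ∑ x, χ x * star (χ' x) * D x = 0) ↔ ∀ x, χ x * D x = 0 := by
  refine ⟨fun h x => ?_, fun h χ' => sum_eq_zero fun x _ => ?_⟩
  · have hterm := (sum_eq_zero_iff_of_nonneg fun x _ =>
      mul_nonneg (mul_star_self_nonneg (χ x)) (hD x)).1 (h χ) x (mem_univ x)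
    rcases mul_eq_zero.1 hterm with hχ | hDx
    · rw [(CStarRing.mul_star_self_eq_zero_iff _).1 hχ, zero_mul]
    · rw [hDx, mul_zero]
  · rw [mul_right_comm, h x, zero_mul]

theorem stmt_11_general {Wt W V : Type*} [Group Wt] [Fintype Wt] [Group W] [Fintype W]
    [AddCommGroup V] [Module ℂ V]
    (p : Wt →* W) (hp : Function.Surjective p)
    (ρ : Representation ℂ W V)
    (aV : ℝ) (haV : 0 < aV)
    (S : Wt → ℂ)
    (hS : ∀ g : Wt, S g * star (S g) =
      (aV : ℂ) * LinearMap.det ((1 : Module.End ℂ V) + ρ (p g))) :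
    (∀ χ χ' : W → ℂ,
      (1 / (Fintype.card Wt : ℂ)) *
          ∑ g : Wt, (χ (p g) * S g) * star (χ' (p g) * S g)
        = (aV : ℂ) * ((1 / (Fintype.card W : ℂ)) *
            ∑ w : W, χ w * star (χ' w) *
              LinearMap.det ((1 : Module.End ℂ V) + ρ w)))
    ∧ (∀ χ : W → ℂ,
        (∀ χ' : W → ℂ,
          (1 / (Fintype.card W : ℂ)) *
              ∑ w : W, χ w * star (χ' w) *
                LinearMap.det ((1 : Module.End ℂ V) + ρ w) = 0)
          ↔ ∀ g : Wt, χ (p g) * S g = 0) := by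
  set D : W → ℂ := fun w => LinearMap.det ((1 : Module.End ℂ V) + ρ w)
  have haV0 : (aV : ℂ) ≠ 0 := Complex.ofReal_ne_zero.2 haV.ne'
  have hD : ∀ w, 0 ≤ D w := hp.forall.2 fun g => by
    have h := mul_nonneg (inv_nonneg.2 (Complex.zero_le_real.2 haV.le))
      (mul_star_self_nonneg (S g))
    rwa [hS, inv_mul_cancel_left₀ haV0] at h
  have hS_eq_zero : ∀ g, S g = 0 ↔ D (p g) = 0 := fun g => by
    rw [← CStarRing.mul_star_self_eq_zero_iff, hS, mul_eq_zero, or_iff_right haV0]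
  refine ⟨fun χ χ' => ?_, fun χ => ?_⟩
  · simp only [one_div]
    calc (Fintype.card Wt : ℂ)⁻¹ * ∑ g, χ (p g) * S g * star (χ' (p g) * S g)
        = (Fintype.card Wt : ℂ)⁻¹ * ∑ g, aV * (χ (p g) * star (χ' (p g)) * D (p g)) := by
          refine congrArg _ (sum_congr rfl fun g _ => ?_)
          rw [star_mul]
          linear_combination χ (p g) * star (χ' (p g)) * hS g
      _ = aV * ((Fintype.card W : ℂ)⁻¹ * ∑ w, χ w * star (χ' w) * D w) := by
          rw [p.average_comp_of_surjective hp fun w => aV * (χ w * star (χ' w) * D w),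
            ← mul_sum]
          ring
  · have hcard : 1 / (Fintype.card W : ℂ) ≠ 0 :=
      one_div_ne_zero (Nat.cast_ne_zero.2 Fintype.card_ne_zero)
    simp only [mul_eq_zero, hcard, false_or]
    rw [Complex.forall_sum_mul_star_mul_eq_zero_iff hD, hp.forall]
    simp only [mul_eq_zero, hS_eq_zero]

/-- Let `p : W̃ → W` be a double cover of a finite group with
central kernel `{1, z}`, `V` a finite-dimensional complex `W`-representation, and `𝒮`
a genuine (virtual) character of `W̃` satisfying `|𝒮(w̃)|² = a_V·det_V(1 + p(w̃))`.
Then `ι(σ) = σ ⊗ 𝒮` satisfies `⟨ι(σ),ι(σ')⟩_{W̃} = a_V·⟨σ,σ'⟩^{-1}_W` for all virtual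
characters `σ, σ'`, and `ι` kills exactly the radical of `⟨,⟩^{-1}_W` (so it induces
an injection on `R(W)/rad`). -/
theorem stmt_11 {Wt W V : Type*} [Group Wt] [Fintype Wt] [Group W] [Fintype W]
    [AddCommGroup V] [Module ℂ V] [FiniteDimensional ℂ V]
    (p : Wt →* W) (hp : Function.Surjective p)
    (z : Wt) (hz1 : z ≠ 1) (hzc : ∀ g : Wt, z * g = g * z)
    (hker : ∀ g : Wt, p g = 1 ↔ g = 1 ∨ g = z)
    (ρ : Representation ℂ W V)
    (aV : ℝ) (haV : 0 < aV)
    (S : Wt → ℂ)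
    (hgen : ∀ g : Wt, S (z * g) = -S g)
    (hS : ∀ g : Wt, S g * star (S g) =
      (aV : ℂ) * LinearMap.det ((1 : Module.End ℂ V) + ρ (p g))) :
    (∀ χ χ' : W → ℂ,
      (1 / (Fintype.card Wt : ℂ)) *
          ∑ g : Wt, (χ (p g) * S g) * star (χ' (p g) * S g)
        = (aV : ℂ) * ((1 / (Fintype.card W : ℂ)) *
            ∑ w : W, χ w * star (χ' w) *
              LinearMap.det ((1 : Module.End ℂ V) + ρ w)))
    ∧ (∀ χ : W → ℂ,
        (∀ χ' : W → ℂ,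
          (1 / (Fintype.card W : ℂ)) *
              ∑ w : W, χ w * star (χ' w) *
                LinearMap.det ((1 : Module.End ℂ V) + ρ w) = 0)
          ↔ ∀ g : Wt, χ (p g) * S g = 0) :=
  stmt_11_general p hp ρ aV haV S hS
end
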